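/- Let n = 2m ≥ 6 and λ = (n−k, k) with n−k = k or both n−k and k odd. Let a ∈ I^D_{n−k,k} be a marked cup diagram in which {1, 2t} is an unmarked cup with 2t < m (note that then all blocks of a on the vertices 1, …, 2t are unmarked cups and 2t ≤ k). Let b ∈ I^D_{2t,2t} be the marked cup diagram on 2t vertices obtained by restricting a to the vertices 1, …, 2t, and set μ = (2t, 2t). Let P : V_λ → V_μ be the linear map with P(e_i) = e_i for 1 ≤ i ≤ 2t, P(e_i) = 0 for i > 2t, P(f_j) = f_j for 1 ≤ j ≤ 2t, and P(f_j) = 0 for j > 2t. Then for every flag F_• ∈ K_a, the chain F′_• in V_μ defined by F′_i = P(F_i) for 0 ≤ i ≤ 2t and F′_{4t−i} = (F′_i)^⊥ (orthogonal complement with respect to β_μ) for 0 ≤ i < 2t is a complete isotropic flag lying in K_b. -/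

import Mathlib

open Complex Submodule

noncomputable section

/-- `V p q` is the vector space `ℂ^(p+q)` with coordinates indexed by `Fin p ⊕ Fin q`,
corresponding to the basis `e_1, …, e_p, f_1, …, f_q` of `V_λ` for `λ = (p, q)`. -/
abbrev V (p q : ℕ) := (Fin p ⊕ Fin q) → ℂ

/-- The basis vector `e_i` (1-based index `i`; it is `0` if `i` is out of range). -/
def ee (p q : ℕ) (i : ℕ) : V p q :=
  Sum.elim (fun j => if (j : ℕ) + 1 = i then 1 else 0) (fun _ => 0)

/-- The basis vector `f_j` (1-based index `j`; it is `0` if `j` is out of range). -/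
def ff (p q : ℕ) (i : ℕ) : V p q :=
  Sum.elim (fun _ => 0) (fun j => if (j : ℕ) + 1 = i then 1 else 0)

/-- The nilpotent endomorphism `x_λ` with `x(e_i) = e_{i-1}`, `x(f_j) = f_{j-1}`. -/
def xmap (p q : ℕ) : V p q →ₗ[ℂ] V p q where
  toFun v := Sum.elim
    (fun j => if h : (j : ℕ) + 1 < p then v (Sum.inl ⟨(j : ℕ) + 1, h⟩) else 0)
    (fun j => if h : (j : ℕ) + 1 < q then v (Sum.inr ⟨(j : ℕ) + 1, h⟩) else 0)
  map_add' u v := by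
    funext s; cases s <;> dsimp <;> split <;> simp
  map_smul' c v := by
    funext s; cases s <;> dsimp <;> split <;> simp

/-- The Gram matrix of the bilinear form `β_λ` for `λ = (p, q)` (0-based indices). -/
def gram (p q : ℕ) : Matrix (Fin p ⊕ Fin q) (Fin p ⊕ Fin q) ℂ :=
  fun s t =>
    match s, t with
    | Sum.inl i, Sum.inl j =>
        if p = q then 0 else if (i : ℕ) + (j : ℕ) + 2 = p + 1 then (-1 : ℂ) ^ (i : ℕ) else 0
    | Sum.inl i, Sum.inr j =>
        if p = q then (if (i : ℕ) + (j : ℕ) + 2 = p + 1 then (-1 : ℂ) ^ (i : ℕ) else 0) else 0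
    | Sum.inr i, Sum.inl j =>
        if p = q then (if (j : ℕ) + (i : ℕ) + 2 = p + 1 then (-1 : ℂ) ^ (j : ℕ) else 0) else 0
    | Sum.inr i, Sum.inr j =>
        if p = q then 0 else if (i : ℕ) + (j : ℕ) + 2 = q + 1 then (-1 : ℂ) ^ (i : ℕ) else 0

/-- The symmetric bilinear form `β_λ` for `λ = (p, q)`. -/
def beta (p q : ℕ) : LinearMap.BilinForm ℂ (V p q) :=
  Matrix.toLinearMap₂' ℂ (gram p q)

/-- Orthogonal complement with respect to `β_λ`. -/
def orth (p q : ℕ) (W : Submodule ℂ (V p q)) : Submodule ℂ (V p q) :=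
  (beta p q).orthogonal W

/-- The subspace `⟨e_1, …, e_r, f_1, …, f_s⟩`. -/
def EF (p q r s : ℕ) : Submodule ℂ (V p q) :=
  Submodule.span ℂ
    ({v | ∃ i, 1 ≤ i ∧ i ≤ r ∧ v = ee p q i} ∪ {v | ∃ j, 1 ≤ j ∧ j ≤ s ∧ v = ff p q j})

/-- A complete isotropic flag in `(V_λ, β_λ)`, encoded as a function `ℕ → Submodule`
which is `⊤` from degree `p+q` on. -/
def IsFlag (p q : ℕ) (F : ℕ → Submodule ℂ (V p q)) : Prop :=
  (∀ i ≤ p + q, Module.finrank ℂ (F i) = i) ∧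
  (∀ i < p + q, F i ≤ F (i + 1)) ∧
  (∀ i ≤ p + q, F (p + q - i) = orth p q (F i)) ∧
  (∀ i, p + q ≤ i → F i = ⊤)

/-- The flag `F` lies in the Springer fiber of `x_λ`. -/
def InSpringer (p q : ℕ) (F : ℕ → Submodule ℂ (V p q)) : Prop :=
  ∀ i < p + q, (F (i + 1)).map (xmap p q) ≤ F i
/-- The coordinate projection `V_(p,q) → V_(p',q')`, sending `e_i ↦ e_i` (resp. `f_j ↦ f_j`)
when the index is in range and to `0` otherwise. -/
def Pmap (p q p' q' : ℕ) : V p q →ₗ[ℂ] V p' q' where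
  toFun v := Sum.elim
    (fun i => if h : (i : ℕ) < p then v (Sum.inl ⟨(i : ℕ), h⟩) else 0)
    (fun j => if h : (j : ℕ) < q then v (Sum.inr ⟨(j : ℕ), h⟩) else 0)
  map_add' u v := by
    funext s; cases s <;> dsimp <;> split <;> simp
  map_smul' c v := by
    funext s; cases s <;> dsimp <;> split <;> simp

/-- The flag in `V_(p',q')` induced, via a linear map `Q` defined on `W^⊥` and killing `W`
(representing an isomorphism `W^⊥/W ≅ V_(p',q')`), by the part `F_l ⊆ F_{l+1} ⊆ …` of a
flag `F` in `V_(p,q)`:  `F''_i = Q(F_{l+i}/W)` for `i ≤ (p'+q')/2`, and the remaining spaces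
are determined by taking orthogonal complements with respect to `β_(p',q')`. -/
def Qflag (p q p' q' l : ℕ) (W : Submodule ℂ (V p q)) (Q : V p q →ₗ[ℂ] V p' q')
    (F : ℕ → Submodule ℂ (V p q)) : ℕ → Submodule ℂ (V p' q') :=
  fun i =>
    if i ≤ (p' + q') / 2 then (F (l + i) ⊓ orth p q W).map Q
    else if i ≤ p' + q' then orth p' q' ((F (l + (p' + q' - i)) ⊓ orth p q W).map Q)
    else ⊤

/-- The flag in `V_(2t,2t)` obtained from a flag `F` in `V_(p,q)` by applying the projection
`Pmap` to `F_0, …, F_{2t}` and completing by orthogonal complements. -/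
def Pflag (p q t : ℕ) (F : ℕ → Submodule ℂ (V p q)) : ℕ → Submodule ℂ (V (2*t) (2*t)) :=
  fun i =>
    if i ≤ 2*t then (F i).map (Pmap p q (2*t) (2*t))
    else if i ≤ 4*t then orth (2*t) (2*t) ((F (4*t - i)).map (Pmap p q (2*t) (2*t)))
    else ⊤
/-- A marked cup diagram on `verts` vertices (vertices are `1, …, verts`). -/
structure MCD where
  verts : ℕ
  cups : Finset (ℕ × ℕ)
  rays : Finset ℕ
  mcups : Finset (ℕ × ℕ)
  mrays : Finset ℕ
  cups_valid : ∀ c ∈ cups, 1 ≤ c.1 ∧ c.1 < c.2 ∧ c.2 ≤ verts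
  rays_valid : ∀ r ∈ rays, 1 ≤ r ∧ r ≤ verts
  cover : ∀ v, 1 ≤ v → v ≤ verts → v ∈ rays ∨ ∃ c ∈ cups, v = c.1 ∨ v = c.2
  disjoint_cr : ∀ c ∈ cups, c.1 ∉ rays ∧ c.2 ∉ rays
  disjoint_cc : ∀ c ∈ cups, ∀ c' ∈ cups, c ≠ c' →
    c.1 ≠ c'.1 ∧ c.1 ≠ c'.2 ∧ c.2 ≠ c'.1 ∧ c.2 ≠ c'.2
  noncrossing : ∀ c ∈ cups, ∀ c' ∈ cups, ¬(c.1 < c'.1 ∧ c'.1 < c.2 ∧ c.2 < c'.2)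
  no_ray_in_cup : ∀ c ∈ cups, ∀ r ∈ rays, ¬(c.1 < r ∧ r < c.2)
  mcups_sub : mcups ⊆ cups
  mrays_sub : mrays ⊆ rays
  mcup_cond : ∀ c ∈ mcups,
    (∀ c' ∈ cups, ¬(c'.1 < c.1 ∧ c.2 < c'.2)) ∧ (∀ r ∈ rays, r ≤ c.2)
  mray_cond : ∀ r ∈ mrays, ∀ r' ∈ rays, r' ≤ r

/-- The number of cups of `a` lying entirely to the left of vertex `i`. -/
def cnum (a : MCD) (i : ℕ) : ℕ := (a.cups.filter (fun c => c.2 < i)).card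

/-- Membership in the subvariety `K_a` attached to a marked cup diagram `a`,
for the type D Springer fiber of `x_λ`, `λ = (p, k)`. -/
def InK (p k : ℕ) (a : MCD) (F : ℕ → Submodule ℂ (V p k)) : Prop :=
  IsFlag p k F ∧ InSpringer p k F ∧
  -- (i) unmarked cups
  (∀ c ∈ a.cups, c ∉ a.mcups →
    F c.2 = Submodule.comap ((xmap p k) ^ ((c.2 - c.1 + 1) / 2)) (F (c.1 - 1))) ∧
  -- (ii) marked cups
  (∀ c ∈ a.mcups,
    F (c.1 - 1) ⊔ (F c.2).map ((xmap p k) ^ ((c.2 - c.1 + 1) / 2)) = F c.1 ∧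
    orth p k (F c.2) = Submodule.comap ((xmap p k) ^ ((p + k) / 2 - c.2)) (F c.2)) ∧
  -- rays, case n - k = k
  (p = k →
    (∀ r ∈ a.mrays, F r = EF p k ((r - 1) / 2) ((r + 1) / 2)) ∧
    (∀ r ∈ a.rays, r ∉ a.mrays → F r = EF p k ((r + 1) / 2) ((r - 1) / 2))) ∧
  -- rays, case n - k > k
  (p ≠ k →
    (∀ r ∈ a.mrays,
      F r = EF p k (r - cnum a r - 1) (cnum a r) ⊔
        Submodule.span ℂ {ff p k (cnum a r + 1) + ee p k (r - cnum a r)}) ∧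
    (∀ r ∈ a.rays, r ∉ a.mrays → (∀ r' ∈ a.rays, r' ≤ r) →
      F r = EF p k (r - cnum a r - 1) (cnum a r) ⊔
        Submodule.span ℂ {ff p k (cnum a r + 1) - ee p k (r - cnum a r)}) ∧
    (∀ r ∈ a.rays, r ∉ a.mrays → (∃ r' ∈ a.rays, r < r') →
      F r = EF p k (r - cnum a r) (cnum a r)))

namespace S8

open Module LinearMap

variable {p q : ℕ}

/-- left (`e`-side) coordinate of a vector, `ℕ`-indexed, `0` out of range. -/
def cl (v : V p q) (i : ℕ) : ℂ := if h : i < p then v (Sum.inl ⟨i, h⟩) else 0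

/-- right (`f`-side) coordinate. -/
def cr (v : V p q) (i : ℕ) : ℂ := if h : i < q then v (Sum.inr ⟨i, h⟩) else 0

lemma cl_inl (v : V p q) (i : Fin p) : v (Sum.inl i) = cl v i := by
  simp [cl, i.isLt]

lemma cr_inr (v : V p q) (i : Fin q) : v (Sum.inr i) = cr v i := by
  simp [cr, i.isLt]

lemma ext_c {v w : V p q} (h : ∀ i, cl v i = cl w i) (h' : ∀ i, cr v i = cr w i) : v = w := by
  funext s
  cases s with
  | inl i => have := h i; rwa [cl, cl, dif_pos i.isLt, dif_pos i.isLt] at this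
  | inr i => have := h' i; rwa [cr, cr, dif_pos i.isLt, dif_pos i.isLt] at this

lemma cl_zero (i : ℕ) : cl (0 : V p q) i = 0 := by simp [cl]

lemma cr_zero (i : ℕ) : cr (0 : V p q) i = 0 := by simp [cr]

lemma cl_big {v : V p q} {i : ℕ} (h : p ≤ i) : cl v i = 0 := dif_neg (by omega)

lemma cr_big {v : V p q} {i : ℕ} (h : q ≤ i) : cr v i = 0 := dif_neg (by omega)

lemma eq_zero_c {v : V p q} (h : ∀ i, cl v i = 0) (h' : ∀ i, cr v i = 0) : v = 0 :=
  ext_c (fun i => by rw [h i, cl_zero]) (fun i => by rw [h' i, cr_zero])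

lemma cl_xmap (v : V p q) (i : ℕ) : cl (xmap p q v) i = cl v (i + 1) := by
  by_cases h1 : i < p
  · by_cases h2 : i + 1 < p
    · rw [cl, dif_pos h1]
      show (if h : (i : ℕ) + 1 < p then v (Sum.inl ⟨i + 1, h⟩) else 0) = _
      rw [dif_pos h2, cl, dif_pos h2]
    · rw [cl, dif_pos h1]
      show (if h : (i : ℕ) + 1 < p then v (Sum.inl ⟨i + 1, h⟩) else 0) = _
      rw [dif_neg h2, cl, dif_neg h2]
  · rw [cl_big (by omega), cl_big (by omega)]

lemma cr_xmap (v : V p q) (i : ℕ) : cr (xmap p q v) i = cr v (i + 1) := by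
  by_cases h1 : i < q
  · by_cases h2 : i + 1 < q
    · rw [cr, dif_pos h1]
      show (if h : (i : ℕ) + 1 < q then v (Sum.inr ⟨i + 1, h⟩) else 0) = _
      rw [dif_pos h2, cr, dif_pos h2]
    · rw [cr, dif_pos h1]
      show (if h : (i : ℕ) + 1 < q then v (Sum.inr ⟨i + 1, h⟩) else 0) = _
      rw [dif_neg h2, cr, dif_neg h2]
  · rw [cr_big (by omega), cr_big (by omega)]

lemma cl_xpow (j : ℕ) (v : V p q) (i : ℕ) : cl ((xmap p q ^ j) v) i = cl v (i + j) := by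
  induction j generalizing i v with
  | zero => simp
  | succ n ih =>
      rw [pow_succ, Module.End.mul_apply, ih, cl_xmap]; ring_nf

lemma cr_xpow (j : ℕ) (v : V p q) (i : ℕ) : cr ((xmap p q ^ j) v) i = cr v (i + j) := by
  induction j generalizing i v with
  | zero => simp
  | succ n ih =>
      rw [pow_succ, Module.End.mul_apply, ih, cr_xmap]; ring_nf

/-- coordinates of `v` vanish from index `j` on. -/
def Supp (v : V p q) (j : ℕ) : Prop := ∀ i, j ≤ i → cl v i = 0 ∧ cr v i = 0

lemma xpow_eq_zero_iff {v : V p q} {j : ℕ} : (xmap p q ^ j) v = 0 ↔ Supp v j := by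
  constructor
  · intro h i hi
    have h1 : cl ((xmap p q ^ j) v) (i - j) = 0 := by rw [h, cl_zero]
    have h2 : cr ((xmap p q ^ j) v) (i - j) = 0 := by rw [h, cr_zero]
    rw [cl_xpow] at h1; rw [cr_xpow] at h2
    have e : i - j + j = i := by omega
    rw [e] at h1 h2; exact ⟨h1, h2⟩
  · intro h
    refine eq_zero_c (fun i => ?_) (fun i => ?_)
    · rw [cl_xpow]; exact (h (i + j) (by omega)).1
    · rw [cr_xpow]; exact (h (i + j) (by omega)).2

lemma mem_ker_xpow {v : V p q} {j : ℕ} :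
    v ∈ LinearMap.ker (xmap p q ^ j) ↔ Supp v j := by
  rw [LinearMap.mem_ker]; exact xpow_eq_zero_iff


section Pmap

variable {p q p' q' : ℕ}

lemma cl_P (v : V p q) (i : ℕ) :
    cl (Pmap p q p' q' v) i = if i < p' then cl v i else 0 := by
  by_cases h1 : i < p'
  · rw [if_pos h1, cl, dif_pos h1]
    show (if h : (i : ℕ) < p then v (Sum.inl ⟨i, h⟩) else 0) = _
    rw [cl]
  · rw [if_neg h1, cl_big (by omega)]

lemma cr_P (v : V p q) (i : ℕ) :
    cr (Pmap p q p' q' v) i = if i < q' then cr v i else 0 := by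
  by_cases h1 : i < q'
  · rw [if_pos h1, cr, dif_pos h1]
    show (if h : (i : ℕ) < q then v (Sum.inr ⟨i, h⟩) else 0) = _
    rw [cr]
  · rw [if_neg h1, cr_big (by omega)]

end Pmap

section comm

variable {p k t : ℕ}

lemma P_x_comm {v : V p k} (hv : Supp v t) :
    Pmap p k (2*t) (2*t) (xmap p k v) = xmap (2*t) (2*t) (Pmap p k (2*t) (2*t) v) := by
  refine ext_c (fun i => ?_) (fun i => ?_)
  · rw [cl_P, cl_xmap, cl_xmap, cl_P]
    by_cases h1 : i + 1 < 2*t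
    · rw [if_pos (by omega), if_pos h1]
    · by_cases h2 : i < 2*t
      · rw [if_pos h2, if_neg h1, (hv (i+1) (by omega)).1]
      · rw [if_neg h2, if_neg h1]
  · rw [cr_P, cr_xmap, cr_xmap, cr_P]
    by_cases h1 : i + 1 < 2*t
    · rw [if_pos (by omega), if_pos h1]
    · by_cases h2 : i < 2*t
      · rw [if_pos h2, if_neg h1, (hv (i+1) (by omega)).2]
      · rw [if_neg h2, if_neg h1]

lemma Supp.x {v : V p k} (hv : Supp v t) : Supp (xmap p k v) t := by
  intro i hi
  rw [cl_xmap, cr_xmap]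
  exact hv (i+1) (by omega)

lemma P_xpow_comm {v : V p k} (hv : Supp v t) (j : ℕ) :
    Pmap p k (2*t) (2*t) ((xmap p k ^ j) v) = (xmap (2*t) (2*t) ^ j) (Pmap p k (2*t) (2*t) v) := by
  induction j generalizing v with
  | zero => simp
  | succ n ih =>
      have hsx : Supp ((xmap p k ^ n) v) t := by
        intro i hi; rw [cl_xpow, cr_xpow]; exact hv (i + n) (by omega)
      rw [pow_succ', pow_succ', Module.End.mul_apply, Module.End.mul_apply,
        P_x_comm hsx, ih hv]

lemma P_inj_supp {v : V p k} (hv : Supp v t) (h : Pmap p k (2*t) (2*t) v = 0) : v = 0 := by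
  refine eq_zero_c (fun i => ?_) (fun i => ?_)
  · by_cases h1 : i < 2*t
    · have := congrArg (fun w => cl w i) h
      simpa [cl_P, cl_zero, h1] using this
    · exact (hv i (by omega)).1
  · by_cases h1 : i < 2*t
    · have := congrArg (fun w => cr w i) h
      simpa [cr_P, cr_zero, h1] using this
    · exact (hv i (by omega)).2

lemma P_supp {v : V p k} (j : ℕ) (hv : Supp v j) : Supp (Pmap p k (2*t) (2*t) v) j := by
  intro i hi
  rw [cl_P, cr_P]
  refine ⟨?_, ?_⟩ <;> split <;> simp [(hv i hi).1, (hv i hi).2]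

end comm


section beta

variable {t : ℕ}

lemma beta_eval (t : ℕ) (v w : V (2*t) (2*t)) :
    beta (2*t) (2*t) v w =
      ∑ i ∈ Finset.range (2*t), (-1 : ℂ)^i *
        (cl v i * cr w (2*t-1-i) + cr v (2*t-1-i) * cl w i) := by
  have h2 : ∀ a : Fin (2*t),
      (∑ b : Fin (2*t), v (Sum.inl a) • w (Sum.inr b) •
        (if (a:ℕ)+(b:ℕ)+2 = 2*t+1 then ((-1:ℂ))^(a:ℕ) else 0)) =
      (-1:ℂ)^(a:ℕ) * (cl v ↑a * cr w (2*t-1-(a:ℕ))) := by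
    intro a
    have hb : 2*t-1-(a:ℕ) < 2*t := by have := a.isLt; omega
    rw [Finset.sum_eq_single (⟨2*t-1-(a:ℕ), hb⟩ : Fin (2*t))]
    · rw [if_pos (by have := a.isLt; simp; omega)]
      simp only [cl, cr, a.isLt, hb, dif_pos, smul_eq_mul]
      ring
    · intro b _ hb'
      rw [if_neg, smul_zero, smul_zero]
      intro hc
      apply hb'
      have := a.isLt
      exact Fin.ext (by simp; omega)
    · intro h; exact absurd (Finset.mem_univ _) h
  have h3 : ∀ a : Fin (2*t),
      (∑ b : Fin (2*t), v (Sum.inr a) • w (Sum.inl b) •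
        (if (b:ℕ)+(a:ℕ)+2 = 2*t+1 then ((-1:ℂ))^(b:ℕ) else 0)) =
      (-1:ℂ)^(2*t-1-(a:ℕ)) * (cr v ↑a * cl w (2*t-1-(a:ℕ))) := by
    intro a
    have hb : 2*t-1-(a:ℕ) < 2*t := by have := a.isLt; omega
    rw [Finset.sum_eq_single (⟨2*t-1-(a:ℕ), hb⟩ : Fin (2*t))]
    · rw [if_pos (by have := a.isLt; simp; omega)]
      simp only [cl, cr, a.isLt, hb, dif_pos, smul_eq_mul]
      ring
    · intro b _ hb'
      rw [if_neg, smul_zero, smul_zero]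
      intro hc
      apply hb'
      have := a.isLt
      exact Fin.ext (by simp; omega)
    · intro h; exact absurd (Finset.mem_univ _) h
  rw [beta, Matrix.toLinearMap₂'_apply, Fintype.sum_sum_type]
  have e1 : (∑ a : Fin (2*t), ∑ s, v (Sum.inl a) • w s • gram (2*t) (2*t) (Sum.inl a) s) =
      ∑ a : Fin (2*t), (-1:ℂ)^(a:ℕ) * (cl v ↑a * cr w (2*t-1-(a:ℕ))) := by
    refine Finset.sum_congr rfl (fun a _ => ?_)
    rw [Fintype.sum_sum_type]
    have z1 : (∑ b : Fin (2*t), v (Sum.inl a) • w (Sum.inl b) •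
        gram (2*t) (2*t) (Sum.inl a) (Sum.inl b)) = 0 := by
      refine Finset.sum_eq_zero (fun b _ => ?_)
      show v (Sum.inl a) • w (Sum.inl b) • (if 2*t = 2*t then (0:ℂ) else _) = 0
      rw [if_pos rfl, smul_zero, smul_zero]
    rw [z1, zero_add]
    have : (∑ b : Fin (2*t), v (Sum.inl a) • w (Sum.inr b) •
        gram (2*t) (2*t) (Sum.inl a) (Sum.inr b)) =
        (∑ b : Fin (2*t), v (Sum.inl a) • w (Sum.inr b) •
        (if (a:ℕ)+(b:ℕ)+2 = 2*t+1 then ((-1:ℂ))^(a:ℕ) else 0)) := by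
      refine Finset.sum_congr rfl (fun b _ => ?_)
      show _ • _ • (if 2*t = 2*t then (if (a:ℕ)+(b:ℕ)+2 = 2*t+1 then ((-1:ℂ))^(a:ℕ) else 0) else 0) = _
      rw [if_pos rfl]
    rw [this, h2 a]
  have e2 : (∑ a : Fin (2*t), ∑ s, v (Sum.inr a) • w s • gram (2*t) (2*t) (Sum.inr a) s) =
      ∑ a : Fin (2*t), (-1:ℂ)^(2*t-1-(a:ℕ)) * (cr v ↑a * cl w (2*t-1-(a:ℕ))) := by
    refine Finset.sum_congr rfl (fun a _ => ?_)
    rw [Fintype.sum_sum_type]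
    have z1 : (∑ b : Fin (2*t), v (Sum.inr a) • w (Sum.inr b) •
        gram (2*t) (2*t) (Sum.inr a) (Sum.inr b)) = 0 := by
      refine Finset.sum_eq_zero (fun b _ => ?_)
      show v (Sum.inr a) • w (Sum.inr b) • (if 2*t = 2*t then (0:ℂ) else _) = 0
      rw [if_pos rfl, smul_zero, smul_zero]
    rw [z1, add_zero]
    have : (∑ b : Fin (2*t), v (Sum.inr a) • w (Sum.inl b) •
        gram (2*t) (2*t) (Sum.inr a) (Sum.inl b)) =
        (∑ b : Fin (2*t), v (Sum.inr a) • w (Sum.inl b) •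
        (if (b:ℕ)+(a:ℕ)+2 = 2*t+1 then ((-1:ℂ))^(b:ℕ) else 0)) := by
      refine Finset.sum_congr rfl (fun b _ => ?_)
      show _ • _ • (if 2*t = 2*t then (if (b:ℕ)+(a:ℕ)+2 = 2*t+1 then ((-1:ℂ))^(b:ℕ) else 0) else 0) = _
      rw [if_pos rfl]
    rw [this, h3 a]
  rw [e1, e2]
  rw [Fin.sum_univ_eq_sum_range (fun a => (-1:ℂ)^a * (cl v a * cr w (2*t-1-a))) (2*t)]
  rw [Fin.sum_univ_eq_sum_range (fun a => (-1:ℂ)^(2*t-1-a) * (cr v a * cl w (2*t-1-a))) (2*t)]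
  have e3 : (∑ a ∈ Finset.range (2*t), (-1:ℂ)^(2*t-1-a) * (cr v a * cl w (2*t-1-a))) =
      ∑ a ∈ Finset.range (2*t), (-1:ℂ)^a * (cr v (2*t-1-a) * cl w a) := by
    rw [← Finset.sum_range_reflect (fun a => (-1:ℂ)^a * (cr v (2*t-1-a) * cl w a)) (2*t)]
    refine Finset.sum_congr rfl (fun a ha => ?_)
    have ha' := Finset.mem_range.mp ha
    have : 2*t-1-(2*t-1-a) = a := by omega
    rw [this]
  rw [e3, ← Finset.sum_add_distrib]
  refine Finset.sum_congr rfl (fun a _ => ?_)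
  ring

end beta


section beta2

lemma beta_symm (t : ℕ) (v w : V (2*t) (2*t)) :
    beta (2*t) (2*t) v w = beta (2*t) (2*t) w v := by
  rw [beta_eval, beta_eval]
  exact Finset.sum_congr rfl fun a _ => by ring

lemma beta_refl (t : ℕ) : (beta (2*t) (2*t)).IsRefl := by
  intro v w h
  rw [beta_symm]; exact h

lemma cl_single_inr {p q : ℕ} (b : Fin q) (j : ℕ) :
    cl (Pi.single (Sum.inr b) (1:ℂ) : V p q) j = 0 := by
  rw [cl]; split
  · exact Pi.single_eq_of_ne (by simp) 1
  · rfl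

lemma cr_single_inl {p q : ℕ} (b : Fin p) (j : ℕ) :
    cr (Pi.single (Sum.inl b) (1:ℂ) : V p q) j = 0 := by
  rw [cr]; split
  · exact Pi.single_eq_of_ne (by simp) 1
  · rfl

lemma cr_single_inr {p q : ℕ} (b : Fin q) (j : ℕ) :
    cr (Pi.single (Sum.inr b) (1:ℂ) : V p q) j = if j = (b:ℕ) then 1 else 0 := by
  rw [cr]; split
  · rename_i h
    rw [Pi.single_apply]
    by_cases hj : j = (b:ℕ)
    · rw [if_pos hj, if_pos (by exact congrArg Sum.inr (Fin.ext hj))]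
    · rw [if_neg hj, if_neg (by simp [Fin.ext_iff]; omega)]
  · rename_i h
    rw [if_neg (by have := b.isLt; omega)]

lemma cl_single_inl {p q : ℕ} (b : Fin p) (j : ℕ) :
    cl (Pi.single (Sum.inl b) (1:ℂ) : V p q) j = if j = (b:ℕ) then 1 else 0 := by
  rw [cl]; split
  · rename_i h
    rw [Pi.single_apply]
    by_cases hj : j = (b:ℕ)
    · rw [if_pos hj, if_pos (by exact congrArg Sum.inl (Fin.ext hj))]
    · rw [if_neg hj, if_neg (by simp [Fin.ext_iff]; omega)]
  · rename_i h
    rw [if_neg (by have := b.isLt; omega)]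

lemma beta_nondeg (t : ℕ) : (beta (2*t) (2*t)).Nondegenerate := by
  refine (LinearMap.IsRefl.nondegenerate_iff_separatingLeft (beta_refl t)).mpr ?_
  intro v hv
  refine eq_zero_c (fun i => ?_) (fun i => ?_)
  · by_cases h1 : i < 2*t
    · obtain ⟨b0, hb0⟩ : ∃ b0 : Fin (2*t), (b0:ℕ) = 2*t-1-i := ⟨⟨2*t-1-i, by omega⟩, rfl⟩
      have key := hv (Pi.single (Sum.inr b0) 1)
      rw [beta_eval] at key
      rw [Finset.sum_eq_single i] at key
      · rw [cr_single_inr, cl_single_inr, hb0, if_pos (by omega)] at key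
        have h2 : ((-1:ℂ))^i ≠ 0 := pow_ne_zero _ (by norm_num)
        have h3 : cl v i * 1 + cr v (2*t-1-i) * 0 = 0 := by
          rcases mul_eq_zero.mp key with h | h
          · exact absurd h h2
          · exact h
        simpa using h3
      · intro a ha ha'
        have ha2 := Finset.mem_range.mp ha
        rw [cr_single_inr, cl_single_inr, hb0, if_neg (by omega)]
        ring
      · intro h; exact absurd (Finset.mem_range.mpr h1) h
    · exact cl_big (by omega)
  · by_cases h1 : i < 2*t
    · obtain ⟨b0, hb0⟩ : ∃ b0 : Fin (2*t), (b0:ℕ) = 2*t-1-i := ⟨⟨2*t-1-i, by omega⟩, rfl⟩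
      have key := hv (Pi.single (Sum.inl b0) 1)
      rw [beta_eval] at key
      rw [Finset.sum_eq_single (2*t-1-i)] at key
      · rw [cr_single_inl, cl_single_inl, hb0, if_pos (by omega)] at key
        have h2 : ((-1:ℂ))^(2*t-1-i) ≠ 0 := pow_ne_zero _ (by norm_num)
        have e : 2*t-1-(2*t-1-i) = i := by omega
        rw [e] at key
        have h3 : cl v (2*t-1-i) * 0 + cr v i * 1 = 0 := by
          rcases mul_eq_zero.mp key with h | h
          · exact absurd h h2
          · exact h
        simpa using h3
      · intro a ha ha'
        have ha2 := Finset.mem_range.mp ha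
        rw [cr_single_inl, cl_single_inl, hb0, if_neg (by omega)]
        ring
      · intro h; exact absurd (Finset.mem_range.mpr (by omega)) h
    · exact cr_big (by omega)

lemma beta_skew (t : ℕ) (v w : V (2*t) (2*t)) :
    beta (2*t) (2*t) (xmap (2*t) (2*t) v) w
      = - beta (2*t) (2*t) v (xmap (2*t) (2*t) w) := by
  rcases Nat.eq_zero_or_pos t with h0 | hpos
  · subst h0
    rw [beta_eval, beta_eval]; simp
  obtain ⟨s, hs⟩ : ∃ s, 2*t = s + 1 := ⟨2*t-1, by omega⟩
  have hL : beta (2*t) (2*t) (xmap (2*t) (2*t) v) w =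
      (∑ a ∈ Finset.range (2*t), (-1:ℂ)^a * (cl v (a+1) * cr w (2*t-1-a))) +
      (∑ a ∈ Finset.range (2*t), (-1:ℂ)^a * (cr v (2*t-1-a+1) * cl w a)) := by
    rw [beta_eval, ← Finset.sum_add_distrib]
    refine Finset.sum_congr rfl (fun a ha => ?_)
    rw [cl_xmap, cr_xmap]
    ring
  have hR : beta (2*t) (2*t) v (xmap (2*t) (2*t) w) =
      (∑ a ∈ Finset.range (2*t), (-1:ℂ)^a * (cl v a * cr w (2*t-1-a+1))) +
      (∑ a ∈ Finset.range (2*t), (-1:ℂ)^a * (cr v (2*t-1-a) * cl w (a+1))) := by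
    rw [beta_eval, ← Finset.sum_add_distrib]
    refine Finset.sum_congr rfl (fun a ha => ?_)
    rw [cl_xmap, cr_xmap]
    ring
  have h1 : (∑ a ∈ Finset.range (2*t), (-1:ℂ)^a * (cl v (a+1) * cr w (2*t-1-a))) =
      - ∑ a ∈ Finset.range (2*t), (-1:ℂ)^a * (cl v a * cr w (2*t-1-a+1)) := by
    have hr : Finset.range (2*t) = Finset.range (s+1) := by rw [hs]
    rw [hr, Finset.sum_range_succ, Finset.sum_range_succ']
    have e1 : cl v (s+1) = 0 := cl_big (by omega)
    have e2 : cr w (2*t-1-0+1) = 0 := cr_big (by omega)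
    rw [e1, e2]
    have e3 : (∑ a ∈ Finset.range s, (-1:ℂ)^(a+1) * (cl v (a+1) * cr w (2*t-1-(a+1)+1))) =
        ∑ a ∈ Finset.range s, -((-1:ℂ)^a * (cl v (a+1) * cr w (2*t-1-a))) := by
      refine Finset.sum_congr rfl (fun a ha => ?_)
      have ha2 := Finset.mem_range.mp ha
      have e4 : 2*t-1-(a+1)+1 = 2*t-1-a := by omega
      rw [e4, pow_succ]
      ring
    rw [e3, Finset.sum_neg_distrib]
    ring
  have h2 : (∑ a ∈ Finset.range (2*t), (-1:ℂ)^a * (cr v (2*t-1-a+1) * cl w a)) =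
      - ∑ a ∈ Finset.range (2*t), (-1:ℂ)^a * (cr v (2*t-1-a) * cl w (a+1)) := by
    have hr : Finset.range (2*t) = Finset.range (s+1) := by rw [hs]
    rw [hr, Finset.sum_range_succ', Finset.sum_range_succ]
    have e1 : cr v (2*t-1-0+1) = 0 := cr_big (by omega)
    have e2 : cl w (s+1) = 0 := cl_big (by omega)
    rw [e1, e2]
    have e3 : (∑ a ∈ Finset.range s, (-1:ℂ)^(a+1) * (cr v (2*t-1-(a+1)+1) * cl w (a+1))) =
        ∑ a ∈ Finset.range s, -((-1:ℂ)^a * (cr v (2*t-1-a) * cl w (a+1))) := by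
      refine Finset.sum_congr rfl (fun a ha => ?_)
      have ha2 := Finset.mem_range.mp ha
      have e4 : 2*t-1-(a+1)+1 = 2*t-1-a := by omega
      rw [e4, pow_succ]
      ring
    rw [e3, Finset.sum_neg_distrib]
    ring
  rw [hL, hR, h1, h2]
  ring

end beta2


section rank

variable {p q : ℕ}

lemma cl_add (v w : V p q) (i : ℕ) : cl (v + w) i = cl v i + cl w i := by
  rw [cl, cl, cl]; split <;> simp

lemma cr_add (v w : V p q) (i : ℕ) : cr (v + w) i = cr v i + cr w i := by
  rw [cr, cr, cr]; split <;> simp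

lemma cl_smul (c : ℂ) (v : V p q) (i : ℕ) : cl (c • v) i = c * cl v i := by
  rw [cl, cl]; split <;> simp

lemma cr_smul (c : ℂ) (v : V p q) (i : ℕ) : cr (c • v) i = c * cr v i := by
  rw [cr, cr]; split <;> simp

lemma finrank_V (p q : ℕ) : Module.finrank ℂ (V p q) = p + q := by
  rw [Module.finrank_pi]
  simp

lemma finrank_map_inj {M N : Type*} [AddCommGroup M] [Module ℂ M] [AddCommGroup N] [Module ℂ N]
    [FiniteDimensional ℂ M]
    (f : M →ₗ[ℂ] N) (W : Submodule ℂ M)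
    (h : ∀ v ∈ W, f v = 0 → v = 0) :
    Module.finrank ℂ ↥(W.map f) = Module.finrank ℂ ↥W := by
  have h1 := LinearMap.finrank_range_add_finrank_ker (f.domRestrict W)
  rw [LinearMap.range_domRestrict] at h1
  have h2 : LinearMap.ker (f.domRestrict W) = ⊥ := by
    rw [LinearMap.ker_eq_bot']
    rintro ⟨v, hv⟩ hfv
    have : f v = 0 := by
      simpa [LinearMap.domRestrict_apply] using hfv
    exact Subtype.ext (h v hv this)
  rw [h2, finrank_bot] at h1
  omega

lemma finrank_comap_eq {M : Type*} [AddCommGroup M] [Module ℂ M] [FiniteDimensional ℂ M]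
    (f : M →ₗ[ℂ] M) (U : Submodule ℂ M) :
    Module.finrank ℂ ↥(U.comap f) =
      Module.finrank ℂ ↥(U ⊓ LinearMap.range f) + Module.finrank ℂ ↥(LinearMap.ker f) := by
  have h1 := LinearMap.finrank_range_add_finrank_ker (f.domRestrict (U.comap f))
  rw [LinearMap.range_domRestrict, Submodule.map_comap_eq, LinearMap.ker_domRestrict] at h1
  have h2 : LinearMap.ker f ≤ U.comap f := fun x hx => by
    simp [Submodule.mem_comap, LinearMap.mem_ker.mp hx]
  rw [(Submodule.comapSubtypeEquivOfLe h2).finrank_eq] at h1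
  rw [← h1, inf_comm]

lemma finrank_ker_xpow (t d : ℕ) (hd : d ≤ 2*t) :
    Module.finrank ℂ ↥(LinearMap.ker (xmap (2*t) (2*t) ^ d)) = 2*d := by
  let vec : (Fin d ⊕ Fin d → ℂ) → V (2*t) (2*t) := fun w =>
    Sum.elim (fun i : Fin (2*t) => if h : (i:ℕ) < d then w (Sum.inl ⟨(i:ℕ), h⟩) else 0)
             (fun i : Fin (2*t) => if h : (i:ℕ) < d then w (Sum.inr ⟨(i:ℕ), h⟩) else 0)
  have cl_vec : ∀ w i, cl (vec w) i = if h : i < d then w (Sum.inl ⟨i, h⟩) else 0 := by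
    intro w i
    rw [cl]
    by_cases h1 : i < 2*t
    · rw [dif_pos h1]; rfl
    · rw [dif_neg h1, dif_neg (by omega)]
  have cr_vec : ∀ w i, cr (vec w) i = if h : i < d then w (Sum.inr ⟨i, h⟩) else 0 := by
    intro w i
    rw [cr]
    by_cases h1 : i < 2*t
    · rw [dif_pos h1]; rfl
    · rw [dif_neg h1, dif_neg (by omega)]
  have hmem : ∀ w, vec w ∈ LinearMap.ker (xmap (2*t) (2*t) ^ d) := by
    intro w
    rw [mem_ker_xpow]
    intro i hi
    rw [cl_vec, cr_vec, dif_neg (by omega), dif_neg (by omega)]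
    exact ⟨rfl, rfl⟩
  let E : ↥(LinearMap.ker (xmap (2*t) (2*t) ^ d)) ≃ₗ[ℂ] (Fin d ⊕ Fin d → ℂ) :=
    { toFun := fun u => Sum.elim (fun i : Fin d => cl u.1 (i:ℕ)) (fun i : Fin d => cr u.1 (i:ℕ))
      map_add' := by
        intro u u'; funext s
        cases s with
        | inl i => simp [cl_add]
        | inr i => simp [cr_add]
      map_smul' := by
        intro c u; funext s
        cases s with
        | inl i => simp [cl_smul]
        | inr i => simp [cr_smul]
      invFun := fun w => ⟨vec w, hmem w⟩
      left_inv := by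
        intro u
        apply Subtype.ext
        have hu := mem_ker_xpow.mp u.2
        refine ext_c (fun i => ?_) (fun i => ?_)
        · rw [cl_vec]
          by_cases h1 : i < d
          · rw [dif_pos h1]; rfl
          · rw [dif_neg h1, (hu i (by omega)).1]
        · rw [cr_vec]
          by_cases h1 : i < d
          · rw [dif_pos h1]; rfl
          · rw [dif_neg h1, (hu i (by omega)).2]
      right_inv := by
        intro w
        funext s
        cases s with
        | inl i =>
            show cl (vec w) (i:ℕ) = w (Sum.inl i)
            rw [cl_vec, dif_pos i.isLt]
        | inr i =>
            show cr (vec w) (i:ℕ) = w (Sum.inr i)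
            rw [cr_vec, dif_pos i.isLt] }
  rw [E.finrank_eq, Module.finrank_pi]
  simp
  omega

lemma exists_xpow_preimage (t d : ℕ) (hd : d ≤ 2*t) (w : V (2*t) (2*t))
    (hw : Supp w (2*t - d)) : ∃ u, (xmap (2*t) (2*t) ^ d) u = w := by
  refine ⟨Sum.elim (fun i : Fin (2*t) => if d ≤ (i:ℕ) then cl w ((i:ℕ) - d) else 0)
      (fun i : Fin (2*t) => if d ≤ (i:ℕ) then cr w ((i:ℕ) - d) else 0), ?_⟩
  have cl_u : ∀ i, cl (Sum.elim (fun i : Fin (2*t) => if d ≤ (i:ℕ) then cl w ((i:ℕ) - d) else 0)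
      (fun i : Fin (2*t) => if d ≤ (i:ℕ) then cr w ((i:ℕ) - d) else 0) : V (2*t) (2*t)) i =
      if i < 2*t then (if d ≤ i then cl w (i - d) else 0) else 0 := by
    intro i
    rw [cl]
    by_cases h1 : i < 2*t
    · rw [dif_pos h1, if_pos h1]; rfl
    · rw [dif_neg h1, if_neg h1]
  have cr_u : ∀ i, cr (Sum.elim (fun i : Fin (2*t) => if d ≤ (i:ℕ) then cl w ((i:ℕ) - d) else 0)
      (fun i : Fin (2*t) => if d ≤ (i:ℕ) then cr w ((i:ℕ) - d) else 0) : V (2*t) (2*t)) i =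
      if i < 2*t then (if d ≤ i then cr w (i - d) else 0) else 0 := by
    intro i
    rw [cr]
    by_cases h1 : i < 2*t
    · rw [dif_pos h1, if_pos h1]; rfl
    · rw [dif_neg h1, if_neg h1]
  refine ext_c (fun i => ?_) (fun i => ?_)
  · rw [cl_xpow, cl_u]
    by_cases h1 : i + d < 2*t
    · rw [if_pos h1, if_pos (by omega)]
      congr 1; omega
    · rw [if_neg h1, ((hw i (by omega)).1).symm]
  · rw [cr_xpow, cr_u]
    by_cases h1 : i + d < 2*t
    · rw [if_pos h1, if_pos (by omega)]
      congr 1; omega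
    · rw [if_neg h1, ((hw i (by omega)).2).symm]

end rank

end S8

open S8

/-- Lemma 3.7 (Case I, projection to the first `2t` coordinates).
Let `n = 2m ≥ 6`, `λ = (n-k, k)` a type D two-row partition, and let
`a ∈ I^D_{n-k,k}` have an unmarked cup `{1, 2t}` with `2t < m`.  Let `b ∈ I^D_{2t,2t}`
be the restriction of `a` to the vertices `1, …, 2t`.  Then for every `F ∈ K_a`, the
chain `F'` with `F'_i = P(F_i)` for `i ≤ 2t` and completed by orthogonal complements
with respect to `β_(2t,2t)` is a complete isotropic flag lying in `K_b`.
Here `p` plays the role of `n - k`. -/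
theorem statement8 (p k m t : ℕ) (hn : p + k = 2 * m) (hm : 3 ≤ m) (hk : k ≤ p)
    (hD : p = k ∨ (Odd p ∧ Odd k))
    (a : MCD) (hav : a.verts = m) (hac : a.cups.card = k / 2)
    (hcup : (1, 2*t) ∈ a.cups) (hcupu : (1, 2*t) ∉ a.mcups) (ht : 2*t < m)
    (b : MCD) (hbv : b.verts = 2*t)
    (hbc : b.cups = a.cups.filter (fun c => c.2 ≤ 2*t))
    (hbr : b.rays = ∅) (hbm : b.mcups = ∅) (hbmr : b.mrays = ∅)
    (F : ℕ → Submodule ℂ (V p k)) (hF : InK p k a F) :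
    InK (2*t) (2*t) b (Pflag p k t F) := by
  classical
  obtain ⟨hFlag, hSpr, hCup, hMcup, hRayEq, hRayNe⟩ := hF
  obtain ⟨hdim, hmono, horthF, htopF⟩ := hFlag
  have hcv := a.cups_valid _ hcup
  have ht1 : 1 ≤ t := by
    have := hcv.2.1
    simp at this
    omega
  have hpk : 2*t < p + k := by omega
  have hchain : ∀ j, j ≤ p + k → ∀ i, i ≤ j → F i ≤ F j := by
    intro j
    induction j with
    | zero =>
        intro _ i hi
        have : i = 0 := Nat.le_zero.mp hi
        rw [this]
    | succ n ih =>
        intro hj i hi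
        rcases Nat.eq_or_lt_of_le hi with h | h
        · rw [h]
        · exact le_trans (ih (by omega) i (by omega)) (hmono n (by omega))
  have hF0 : F 0 = ⊥ := Submodule.finrank_eq_zero.mp (hdim 0 (by omega))
  have hF2t : F (2*t) = LinearMap.ker (xmap p k ^ t) := by
    have h1 := hCup (1, 2*t) hcup hcupu
    simp only at h1
    have he : (2*t - 1 + 1)/2 = t := by omega
    rw [he, Nat.sub_self, hF0] at h1
    rw [h1]
    rfl
  have hsupp : ∀ i, i ≤ 2*t → ∀ v, v ∈ F i → Supp v t := by
    intro i hi v hv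
    exact mem_ker_xpow.mp (hF2t ▸ hchain (2*t) (by omega) i hi hv)
  have orth_def : ∀ W : Submodule ℂ (V (2*t) (2*t)),
      orth (2*t) (2*t) W = (beta (2*t) (2*t)).orthogonal W := fun _ => rfl
  have hG_low : ∀ i, i ≤ 2*t → Pflag p k t F i = (F i).map (Pmap p k (2*t) (2*t)) := by
    intro i hi; simp only [Pflag]; rw [if_pos hi]
  have hG_high : ∀ i, 2*t < i → i ≤ 4*t →
      Pflag p k t F i = orth (2*t) (2*t) ((F (4*t - i)).map (Pmap p k (2*t) (2*t))) := by
    intro i h1 h2; simp only [Pflag]; rw [if_neg (by omega), if_pos h2]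
  have hG_top : ∀ i, 4*t < i → Pflag p k t F i = ⊤ := by
    intro i h1; simp only [Pflag]; rw [if_neg (by omega), if_neg (by omega)]
  have hfr : ∀ i, i ≤ 2*t →
      Module.finrank ℂ ↥((F i).map (Pmap p k (2*t) (2*t))) = i := by
    intro i hi
    rw [finrank_map_inj (Pmap p k (2*t) (2*t)) (F i)
      (fun v hv h0 => P_inj_supp (hsupp i hi v hv) h0)]
    exact hdim i (by omega)
  have hiso : ∀ v, v ∈ F (2*t) → ∀ w, w ∈ F (2*t) →
      beta (2*t) (2*t) (Pmap p k (2*t) (2*t) v) (Pmap p k (2*t) (2*t) w) = 0 := by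
    intro v hv w hw
    rw [beta_eval]
    refine Finset.sum_eq_zero (fun i hi => ?_)
    have hi2 := Finset.mem_range.mp hi
    by_cases h1 : t ≤ i
    · have e1 : cl (Pmap p k (2*t) (2*t) v) i = 0 := by
        rw [cl_P, if_pos hi2, (hsupp (2*t) le_rfl v hv i h1).1]
      have e2 : cl (Pmap p k (2*t) (2*t) w) i = 0 := by
        rw [cl_P, if_pos hi2, (hsupp (2*t) le_rfl w hw i h1).1]
      rw [e1, e2]; ring
    · have h2 : t ≤ 2*t-1-i := by omega
      have h3 : 2*t-1-i < 2*t := by omega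
      have e1 : cr (Pmap p k (2*t) (2*t) w) (2*t-1-i) = 0 := by
        rw [cr_P, if_pos h3, (hsupp (2*t) le_rfl w hw (2*t-1-i) h2).2]
      have e2 : cr (Pmap p k (2*t) (2*t) v) (2*t-1-i) = 0 := by
        rw [cr_P, if_pos h3, (hsupp (2*t) le_rfl v hv (2*t-1-i) h2).2]
      rw [e1, e2]; ring
  have hLag : (F (2*t)).map (Pmap p k (2*t) (2*t)) =
      orth (2*t) (2*t) ((F (2*t)).map (Pmap p k (2*t) (2*t))) := by
    refine Submodule.eq_of_le_of_finrank_le ?_ ?_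
    · rintro w ⟨v, hv, rfl⟩
      rw [orth_def, LinearMap.BilinForm.mem_orthogonal_iff]
      rintro n ⟨u, hu, rfl⟩
      exact hiso u hu v hv
    · rw [orth_def, LinearMap.BilinForm.finrank_orthogonal (beta_nondeg t),
        finrank_V, hfr (2*t) le_rfl]
      omega
  have horthG : ∀ i, i ≤ 4*t →
      Pflag p k t F (4*t - i) = orth (2*t) (2*t) (Pflag p k t F i) := by
    intro i hi
    rcases lt_trichotomy i (2*t) with hlt | heq | hgt
    · have e : 4*t - (4*t - i) = i := by omega
      rw [hG_high (4*t-i) (by omega) (by omega), e, hG_low i (by omega)]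
    · subst heq
      have e : 4*t - 2*t = 2*t := by omega
      rw [e, hG_low (2*t) le_rfl]
      exact hLag
    · rw [hG_high i hgt hi, hG_low (4*t-i) (by omega)]
      rw [orth_def, orth_def]
      exact (LinearMap.BilinForm.orthogonal_orthogonal (beta_nondeg t) (beta_refl t) _).symm
  have hsprlow : ∀ j, j + 1 ≤ 2*t →
      (Pflag p k t F (j+1)).map (xmap (2*t) (2*t)) ≤ Pflag p k t F j := by
    intro j hj
    rw [hG_low (j+1) hj, hG_low j (by omega)]
    rintro w hw
    obtain ⟨u, hu, rfl⟩ := hw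
    obtain ⟨v, hv, rfl⟩ := hu
    rw [← P_x_comm (hsupp (j+1) hj v hv)]
    exact Submodule.mem_map_of_mem (hSpr j (by omega) (Submodule.mem_map_of_mem hv))
  refine ⟨⟨?_, ?_, ?_, ?_⟩, ?_, ?_, ?_, ?_, ?_⟩
  · -- finranks
    intro i hi
    by_cases h1 : i ≤ 2*t
    · rw [hG_low i h1]; exact hfr i h1
    · rw [hG_high i (by omega) (by omega), orth_def,
        LinearMap.BilinForm.finrank_orthogonal (beta_nondeg t),
        finrank_V, hfr (4*t-i) (by omega)]
      omega
  · -- monotone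
    intro i hi
    rcases lt_trichotomy (i+1) (2*t+1) with h1 | h1 | h1
    · rw [hG_low (i+1) (by omega), hG_low i (by omega)]
      exact Submodule.map_mono (hmono i (by omega))
    · have e : i = 2*t := by omega
      subst e
      rw [hG_low (2*t) le_rfl, hG_high (2*t+1) (by omega) (by omega)]
      have e2 : 4*t - (2*t+1) = 2*t-1 := by omega
      rw [e2]
      calc (F (2*t)).map (Pmap p k (2*t) (2*t))
          = orth (2*t) (2*t) ((F (2*t)).map (Pmap p k (2*t) (2*t))) := hLag
        _ ≤ orth (2*t) (2*t) ((F (2*t-1)).map (Pmap p k (2*t) (2*t))) := by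
            rw [orth_def, orth_def]
            exact LinearMap.BilinForm.orthogonal_le
              (Submodule.map_mono (hchain (2*t) (by omega) (2*t-1) (by omega)))
    · rw [hG_high (i+1) (by omega) (by omega), hG_high i (by omega) (by omega)]
      rw [orth_def, orth_def]
      refine LinearMap.BilinForm.orthogonal_le (Submodule.map_mono ?_)
      exact hchain (4*t - i) (by omega) (4*t - (i+1)) (by omega)
  · -- orth condition
    intro i hi
    have := horthG i (by omega)
    rw [show 2*t + 2*t - i = 4*t - i from by omega]
    exact this
  · -- top
    intro i hi
    by_cases h1 : 4*t < i
    · exact hG_top i h1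
    · have e : i = 4*t := by omega
      subst e
      rw [hG_high (4*t) (by omega) le_rfl, Nat.sub_self, hF0, Submodule.map_bot, orth_def]
      simp
  · -- Springer
    intro i hi
    by_cases h1 : i + 1 ≤ 2*t
    · exact hsprlow i h1
    · have e1 : Pflag p k t F (i+1) = orth (2*t) (2*t) (Pflag p k t F (4*t - (i+1))) := by
        have := horthG (4*t - (i+1)) (by omega)
        rw [show 4*t - (4*t - (i+1)) = i+1 from by omega] at this
        exact this
      have e2 : Pflag p k t F i = orth (2*t) (2*t) (Pflag p k t F (4*t - i)) := by
        have := horthG (4*t - i) (by omega)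
        rw [show 4*t - (4*t - i) = i from by omega] at this
        exact this
      rw [e1, e2, orth_def, orth_def]
      rintro w hw
      obtain ⟨v, hv, rfl⟩ := hw
      rw [LinearMap.BilinForm.mem_orthogonal_iff]
      intro n hn
      show beta (2*t) (2*t) n (xmap (2*t) (2*t) v) = 0
      have hyn : xmap (2*t) (2*t) n ∈ Pflag p k t F (4*t - (i+1)) := by
        have hstep := hsprlow (4*t - i - 1) (by omega)
        rw [show 4*t - i - 1 + 1 = 4*t - i from by omega] at hstep
        have := hstep (Submodule.mem_map_of_mem hn)
        rwa [show 4*t - i - 1 = 4*t - (i+1) from by omega] at this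
      have h0 : beta (2*t) (2*t) (xmap (2*t) (2*t) n) v = 0 := hv _ hyn
      have hsk := beta_skew t n v
      rw [h0] at hsk
      exact neg_eq_zero.mp hsk.symm
  · -- unmarked cups of b
    intro c hc hcmb
    rw [hbc, Finset.mem_filter] at hc
    obtain ⟨hca, hc2⟩ := hc
    have hcv' := a.cups_valid c hca
    have hcm' : c ∉ a.mcups := by
      intro hmem
      by_cases hce : c = (1, 2*t)
      · exact hcupu (hce ▸ hmem)
      · have hd := a.disjoint_cc c hca (1, 2*t) hcup hce
        refine (a.mcup_cond c hmem).1 (1, 2*t) hcup ⟨?_, ?_⟩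
        · have h1 := hd.1
          simp only at h1
          omega
        · have h4 := hd.2.2.2
          simp only at h4
          omega
    have hlam := hCup c hca hcm'
    set d := (c.2 - c.1 + 1) / 2 with hdd
    have hc11 : c.1 - 1 ≤ 2*t := by omega
    rw [hG_low c.2 hc2, hG_low (c.1-1) hc11]
    have hsub : (F c.2).map (Pmap p k (2*t) (2*t)) ≤
        Submodule.comap ((xmap (2*t) (2*t))^d) ((F (c.1-1)).map (Pmap p k (2*t) (2*t))) := by
      rintro w ⟨v, hv, rfl⟩
      rw [Submodule.mem_comap, ← P_xpow_comm (hsupp c.2 hc2 v hv) d]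
      have hxv : (xmap p k ^ d) v ∈ F (c.1 - 1) := by
        rw [hlam] at hv
        exact hv
      exact Submodule.mem_map_of_mem hxv
    have hrange : ((F (c.1-1)).map (Pmap p k (2*t) (2*t))) ≤
        LinearMap.range ((xmap (2*t) (2*t))^d) := by
      rintro w ⟨v, hv, rfl⟩
      have hs := P_supp (t := t) t (hsupp (c.1-1) hc11 v hv)
      obtain ⟨u, hu⟩ := exists_xpow_preimage t d (by omega)
        (Pmap p k (2*t) (2*t) v) (fun i hi => hs i (by omega))
      exact ⟨u, hu⟩
    have hfin : Module.finrank ℂ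
        ↥(Submodule.comap ((xmap (2*t) (2*t))^d) ((F (c.1-1)).map (Pmap p k (2*t) (2*t)))) ≤
        Module.finrank ℂ ↥((F c.2).map (Pmap p k (2*t) (2*t))) := by
      rw [finrank_comap_eq, inf_eq_left.mpr hrange, hfr (c.1-1) hc11,
        finrank_ker_xpow t d (by omega), hfr c.2 hc2]
      omega
    exact Submodule.eq_of_le_of_finrank_le hsub hfin
  · simp [hbm]
  · intro _
    constructor
    · intro r hr
      rw [hbmr] at hr
      simp at hr
    · intro r hr _
      rw [hbr] at hr
      simp at hr
  · intro h; exact absurd rfl h
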